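/- arXiv:math/0511456 — 4 statements merged into one kernel-verified Lean document; each statement's English description precedes it below -/
import Mathlib

section
/- The Arens-Eells seminorm of a molecule m satisfies ||m|| = sup { Σ_{x∈X} f(x) m(x) : f ∈ Lip_0(X), f is 1-Lipschitz }, where the basepoint e is any fixed point of X. -/
/-- A molecule: finitely supported real function summing to zero. -/
def IsMolecule {X : Type*} (m : X →₀ ℝ) : Prop := m.sum (fun _ v => v) = 0

/-- The elementary molecule `m_{pq} = χ_{p} - χ_{q}`. -/
noncomputable def mol {X : Type*} (p q : X) : X →₀ ℝ :=
  Finsupp.single p 1 - Finsupp.single q 1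

/-- The Arens-Eells seminorm. -/
noncomputable def aeNorm {X : Type*} [MetricSpace X] (m : X →₀ ℝ) : ℝ :=
  sInf { c | ∃ (n : ℕ) (a : Fin n → ℝ) (p q : Fin n → X),
    m = ∑ i, a i • mol (p i) (q i) ∧ c = ∑ i, |a i| * dist (p i) (q i) }

/-!
A 1-Lipschitz `f` pairs with `a • m_{pq}` to at most `|a| d(p, q)`, so every pairing is bounded
by `‖m‖`. Conversely `‖·‖` is a seminorm on the space of molecules, and Hahn–Banach yields a linear
functional `g` on it with `g m = ‖m‖` and `|g| ≤ ‖·‖`. Then `f x = g m_{xe}` vanishes at `e`, is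
1-Lipschitz because `f x - f y = g m_{xy} ≤ ‖m_{xy}‖ ≤ d(x, y)`, and pairs with `m` to `g m`,
since `m = Σ_x m(x) m_{xe}`.
-/

open Finsupp Pointwise

theorem Seminorm.exists_dual_vector_real {E : Type*} [AddCommGroup E] [Module ℝ E]
    (p : Seminorm ℝ E) (v : E) : ∃ g : Module.Dual ℝ E, g v = p v ∧ ∀ x, |g x| ≤ p x := by
  rcases eq_or_ne v 0 with rfl | hv
  · exact ⟨0, by simp, fun x => by simp⟩
  obtain ⟨g, hgv, hg⟩ := Module.Dual.exists_extension_of_le_seminorm_real (ℝ ∙ v)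
    (p v • (LinearEquiv.coord ℝ E v hv : (ℝ ∙ v) →ₗ[ℝ] ℝ)) (p := p) <| by
      rintro ⟨_, hx⟩
      obtain ⟨c, rfl⟩ := Submodule.mem_span_singleton.1 hx
      have hc : LinearEquiv.coord ℝ E v hv ⟨c • v, hx⟩ = c :=
        (LinearEquiv.toSpanNonzeroSingleton ℝ E v hv).symm_apply_apply c
      simp only [LinearMap.smul_apply, LinearEquiv.coe_coe, hc, smul_eq_mul, map_smul_eq_mul,
        Real.norm_eq_abs]
      rw [mul_comm]
      exact mul_le_mul_of_nonneg_right (le_abs_self c) (apply_nonneg p v)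
  refine ⟨g, ?_, hg⟩
  simpa [LinearEquiv.coord_self] using hgv ⟨v, Submodule.mem_span_singleton_self v⟩

theorem Finsupp.sum_mul_eq_linearCombination {X : Type*} (f : X → ℝ) (m : X →₀ ℝ) :
    m.sum (fun x v => f x * v) = linearCombination ℝ f m := by
  simp only [linearCombination_apply, smul_eq_mul, mul_comm]

namespace ArensEells

variable {X : Type*}

noncomputable def molecules (X : Type*) : Submodule ℝ (X →₀ ℝ) :=
  LinearMap.ker (lsum ℝ fun _ => LinearMap.id)

theorem mem_molecules {m : X →₀ ℝ} : m ∈ molecules X ↔ IsMolecule m := Iff.rfl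

theorem mol_mem_molecules (p q : X) : mol p q ∈ molecules X := by
  simp only [molecules, mol, LinearMap.mem_ker, map_sub, lsum_single, LinearMap.id_apply, sub_self]

theorem _root_.IsMolecule.linearCombination_mol {m : X →₀ ℝ} (hm : IsMolecule m) (e : X) :
    linearCombination ℝ (fun x => mol x e) m = m := by
  have h : (m.sum fun _ v => v • single e (1 : ℝ)) = 0 := by
    rw [IsMolecule, Finsupp.sum] at hm
    rw [Finsupp.sum, ← Finset.sum_smul, hm, zero_smul]
  simp only [mol, linearCombination_apply, smul_sub, Finsupp.sum_sub, h, sub_zero]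
  simp only [smul_single_one, sum_single]

noncomputable def potential (g : Module.Dual ℝ (molecules X)) (e : X) (x : X) : ℝ :=
  g ⟨mol x e, mol_mem_molecules x e⟩

theorem potential_self (g : Module.Dual ℝ (molecules X)) (e : X) : potential g e e = 0 := by
  simp only [potential, mol, sub_self]
  exact map_zero g

theorem linearCombination_potential (g : Module.Dual ℝ (molecules X)) (e : X)
    {m : X →₀ ℝ} (hm : IsMolecule m) :
    linearCombination ℝ (potential g e) m = g ⟨m, mem_molecules.2 hm⟩ := by
  have hm' : linearCombination ℝ (fun x => (⟨mol x e, mol_mem_molecules x e⟩ : molecules X)) m =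
      ⟨m, mem_molecules.2 hm⟩ := by
    ext1
    rw [← Submodule.subtype_apply, apply_linearCombination]
    exact hm.linearCombination_mol e
  rw [← hm', apply_linearCombination]
  rfl

variable [MetricSpace X]

def costs (m : X →₀ ℝ) : Set ℝ :=
  { c | ∃ (n : ℕ) (a : Fin n → ℝ) (p q : Fin n → X),
    m = ∑ i, a i • mol (p i) (q i) ∧ c = ∑ i, |a i| * dist (p i) (q i) }

theorem aeNorm_eq_sInf_costs (m : X →₀ ℝ) : aeNorm m = sInf (costs m) := rfl

theorem nonneg_of_mem_costs {m : X →₀ ℝ} {c : ℝ} (hc : c ∈ costs m) : 0 ≤ c := by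
  obtain ⟨n, a, p, q, -, rfl⟩ := hc
  exact Finset.sum_nonneg fun i _ => mul_nonneg (abs_nonneg _) dist_nonneg

theorem bddBelow_costs (m : X →₀ ℝ) : BddBelow (costs m) :=
  ⟨0, fun _ => nonneg_of_mem_costs⟩

theorem zero_mem_costs : (0 : ℝ) ∈ costs (0 : X →₀ ℝ) :=
  ⟨0, Fin.elim0, Fin.elim0, Fin.elim0, by simp, by simp⟩

theorem dist_mem_costs_mol (p q : X) : dist p q ∈ costs (mol p q) :=
  ⟨1, fun _ => 1, fun _ => p, fun _ => q, by simp, by simp⟩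

theorem add_mem_costs {x y : X →₀ ℝ} {c d : ℝ} (hc : c ∈ costs x) (hd : d ∈ costs y) :
    c + d ∈ costs (x + y) := by
  obtain ⟨n, a, p, q, rfl, rfl⟩ := hc
  obtain ⟨n', a', p', q', rfl, rfl⟩ := hd
  exact ⟨n + n', Fin.append a a', Fin.append p p', Fin.append q q',
    by simp [Fin.sum_univ_add], by simp [Fin.sum_univ_add]⟩

theorem smul_mem_costs {x : X →₀ ℝ} {c : ℝ} (hc : c ∈ costs x) (r : ℝ) :
    |r| * c ∈ costs (r • x) := by
  obtain ⟨n, a, p, q, rfl, rfl⟩ := hc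
  exact ⟨n, fun i => r * a i, p, q, by simp [Finset.smul_sum, smul_smul],
    by simp [Finset.mul_sum, abs_mul, mul_assoc]⟩

theorem _root_.IsMolecule.costs_nonempty {m : X →₀ ℝ} (hm : IsMolecule m) : (costs m).Nonempty := by
  rcases isEmpty_or_nonempty X with _ | ⟨⟨e⟩⟩
  · exact ⟨0, Subsingleton.elim (0 : X →₀ ℝ) m ▸ zero_mem_costs⟩
  rw [← hm.linearCombination_mol e, linearCombination_apply]
  exact Finset.sum_induction _ (fun m => (costs m).Nonempty)
    (fun _ _ ⟨c, hc⟩ ⟨d, hd⟩ => ⟨_, add_mem_costs hc hd⟩) ⟨0, zero_mem_costs⟩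
    fun x _ => ⟨_, smul_mem_costs (dist_mem_costs_mol x e) _⟩

theorem aeNorm_le_of_mem_costs {m : X →₀ ℝ} {c : ℝ} (hc : c ∈ costs m) : aeNorm m ≤ c :=
  csInf_le (bddBelow_costs m) hc

theorem aeNorm_zero : aeNorm (0 : X →₀ ℝ) = 0 :=
  le_antisymm (aeNorm_le_of_mem_costs zero_mem_costs)
    (Real.sInf_nonneg fun _ => nonneg_of_mem_costs)

theorem aeNorm_mol_le (p q : X) : aeNorm (mol p q) ≤ dist p q :=
  aeNorm_le_of_mem_costs (dist_mem_costs_mol p q)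

theorem aeNorm_add_le {x y : X →₀ ℝ} (hx : IsMolecule x) (hy : IsMolecule y) :
    aeNorm (x + y) ≤ aeNorm x + aeNorm y := by
  rw [aeNorm_eq_sInf_costs, aeNorm_eq_sInf_costs, aeNorm_eq_sInf_costs,
    ← csInf_add hx.costs_nonempty (bddBelow_costs x) hy.costs_nonempty (bddBelow_costs y)]
  exact csInf_le_csInf (bddBelow_costs _) (hx.costs_nonempty.add hy.costs_nonempty)
    (Set.add_subset_iff.2 fun _ hc _ hd => add_mem_costs hc hd)

theorem aeNorm_smul_le {x : X →₀ ℝ} (hx : IsMolecule x) (r : ℝ) :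
    aeNorm (r • x) ≤ |r| * aeNorm x := by
  rw [aeNorm_eq_sInf_costs, aeNorm_eq_sInf_costs, ← smul_eq_mul,
    ← Real.sInf_smul_of_nonneg (abs_nonneg r)]
  exact csInf_le_csInf (bddBelow_costs _) hx.costs_nonempty.smul_set
    (Set.smul_set_subset_iff.2 fun _ hc => smul_mem_costs hc r)

noncomputable def aeSeminorm : Seminorm ℝ (molecules X) :=
  .ofSMulLE (fun m => aeNorm (m : X →₀ ℝ)) aeNorm_zero
    (fun x y => aeNorm_add_le (mem_molecules.1 x.2) (mem_molecules.1 y.2))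
    fun r x => aeNorm_smul_le (mem_molecules.1 x.2) r

theorem aeSeminorm_apply (m : molecules X) : aeSeminorm m = aeNorm (m : X →₀ ℝ) := rfl

theorem linearCombination_le_of_mem_costs {f : X → ℝ} (hf : LipschitzWith 1 f) {m : X →₀ ℝ}
    {c : ℝ} (hc : c ∈ costs m) : linearCombination ℝ f m ≤ c := by
  obtain ⟨n, a, p, q, rfl, rfl⟩ := hc
  rw [map_sum]
  refine Finset.sum_le_sum fun i _ => ?_
  have hpq : |f (p i) - f (q i)| ≤ dist (p i) (q i) := by
    simpa [Real.dist_eq] using hf.dist_le_mul (p i) (q i)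
  calc linearCombination ℝ f (a i • mol (p i) (q i)) = a i * (f (p i) - f (q i)) := by
        simp [mol]
    _ ≤ |a i| * |f (p i) - f (q i)| := (le_abs_self _).trans (abs_mul _ _).le
    _ ≤ |a i| * dist (p i) (q i) := mul_le_mul_of_nonneg_left hpq (abs_nonneg _)

theorem linearCombination_le_aeNorm {f : X → ℝ} (hf : LipschitzWith 1 f) {m : X →₀ ℝ}
    (hm : IsMolecule m) : linearCombination ℝ f m ≤ aeNorm m :=
  le_csInf hm.costs_nonempty fun _ => linearCombination_le_of_mem_costs hf

theorem lipschitzWith_potential {g : Module.Dual ℝ (molecules X)}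
    (hg : ∀ x, |g x| ≤ aeSeminorm x) (e : X) : LipschitzWith 1 (potential g e) := by
  refine LipschitzWith.of_le_add fun x y => ?_
  have hsub : potential g e x - potential g e y = g ⟨mol x y, mol_mem_molecules x y⟩ := by
    rw [potential, potential, ← map_sub]
    congr 1
    ext1
    simp [mol]
  have hxy := (le_abs_self _).trans (hg ⟨mol x y, mol_mem_molecules x y⟩)
  rw [aeSeminorm_apply] at hxy
  linarith [aeNorm_mol_le x y]

end ArensEells

open ArensEells in
/-- The Arens-Eells seminorm of a molecule `m` satisfies
`‖m‖ = sup { Σ_x f(x) m(x) : f ∈ Lip₀(X), f 1-Lipschitz }`, the basepoint `e` being any fixed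
point of `X`. -/
theorem aeNorm_eq_sup_pairing {X : Type*} [MetricSpace X] (e : X) (m : X →₀ ℝ)
    (hm : IsMolecule m) :
    aeNorm m = sSup { s : ℝ | ∃ f : X → ℝ, LipschitzWith 1 f ∧ f e = 0 ∧
      s = m.sum (fun x v => f x * v) } := by
  refine (IsGreatest.csSup_eq ⟨?_, ?_⟩).symm
  · obtain ⟨g, hgm, hg⟩ := aeSeminorm.exists_dual_vector_real ⟨m, mem_molecules.2 hm⟩
    refine ⟨potential g e, lipschitzWith_potential hg e, potential_self g e, ?_⟩
    rw [sum_mul_eq_linearCombination, linearCombination_potential g e hm, hgm, aeSeminorm_apply]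
  · rintro _ ⟨f, hf, -, rfl⟩
    rw [sum_mul_eq_linearCombination]
    exact linearCombination_le_aeNorm hf hm
end

section
/- The Arens-Eells seminorm of a nonzero molecule is strictly positive; hence ||·|| is a norm on the space of molecules. -/
/-!
Pairing with a 1-Lipschitz `f : X → ℝ` turns every representation `m = ∑ aᵢ m_{pᵢqᵢ}` into
`|∑ₓ m x * f x| ≤ ∑ |aᵢ| d(pᵢ, qᵢ)`, so `|∑ₓ m x * f x| ≤ ‖m‖` (the easy half of
Kantorovich–Rubinstein duality); here `m` summing to zero is what makes the infimum range over
a nonempty set, since `sInf ∅ = 0`. Pick `x₀` with `m x₀ ≠ 0` and let `f = d(·, T)` with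
`T = supp m \ {x₀}`. Since `m` sums to zero, `T` is nonempty; being finite it is closed, so
`f x₀ > 0`, while `f` vanishes on `T`. Hence `‖m‖ ≥ |m x₀| · d(x₀, T) > 0`.
-/

open Finsupp Metric

section

variable {X : Type*}

theorem linearCombination_mol (f : X → ℝ) (p q : X) :
    linearCombination ℝ f (mol p q) = f p - f q := by
  simp [mol, linearCombination_single]

theorem IsMolecule.sum_smul_mol {m : X →₀ ℝ} (hm : IsMolecule m) (x₀ : X) :
    ∑ x ∈ m.support, m x • mol x x₀ = m := by
  have hsum : ∑ x ∈ m.support, m x = 0 := hm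
  simp only [mol, smul_sub, smul_single, smul_eq_mul, mul_one, Finset.sum_sub_distrib]
  rw [← single_finsetSum, hsum, single_zero, sub_zero]
  exact m.sum_single

theorem IsMolecule.exists_eq_sum_mol {m : X →₀ ℝ} (hm : IsMolecule m) :
    ∃ (n : ℕ) (a : Fin n → ℝ) (p q : Fin n → X), m = ∑ i, a i • mol (p i) (q i) := by
  obtain hX | ⟨⟨x₀⟩⟩ := isEmpty_or_nonempty X
  · exact ⟨0, Fin.elim0, Fin.elim0, Fin.elim0, Subsingleton.elim _ _⟩
  let e := m.support.equivFin
  refine ⟨m.support.card, fun i => m (e.symm i), fun i => e.symm i, fun _ => x₀, ?_⟩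
  exact ((e.symm.sum_comp (fun x => m x • mol (x : X) x₀)).trans
    (m.support.sum_coe_sort fun x => m x • mol x x₀)).trans (hm.sum_smul_mol x₀) |>.symm

theorem IsMolecule.support_erase_nonempty [DecidableEq X] {m : X →₀ ℝ} (hm : IsMolecule m)
    {x₀ : X} (hx₀ : x₀ ∈ m.support) : (m.support.erase x₀).Nonempty := by
  rw [Finset.nonempty_iff_ne_empty]
  intro h
  have hsum : ∑ x ∈ m.support, m x = 0 := hm
  rw [← Finset.insert_erase hx₀, h, insert_empty_eq, Finset.sum_singleton] at hsum
  exact Finsupp.mem_support_iff.1 hx₀ hsum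

variable [MetricSpace X]

theorem abs_linearCombination_le_of_eq_sum_mol {f : X → ℝ} (hf : LipschitzWith 1 f) {n : ℕ}
    (a : Fin n → ℝ) (p q : Fin n → X) :
    |linearCombination ℝ f (∑ i, a i • mol (p i) (q i))| ≤ ∑ i, |a i| * dist (p i) (q i) := by
  simp only [map_sum, map_smul, linearCombination_mol, smul_eq_mul]
  refine (Finset.abs_sum_le_sum_abs _ _).trans (Finset.sum_le_sum fun i _ => ?_)
  rw [abs_mul]
  gcongr
  simpa [Real.dist_eq] using hf.dist_le_mul (p i) (q i)

theorem IsMolecule.abs_linearCombination_le_aeNorm {m : X →₀ ℝ} (hm : IsMolecule m)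
    {f : X → ℝ} (hf : LipschitzWith 1 f) : |linearCombination ℝ f m| ≤ aeNorm m := by
  obtain ⟨n, a, p, q, hrep⟩ := hm.exists_eq_sum_mol
  refine le_csInf ⟨_, n, a, p, q, hrep, rfl⟩ ?_
  rintro c ⟨n, a, p, q, rfl, rfl⟩
  exact abs_linearCombination_le_of_eq_sum_mol hf a p q

end

/-- The Arens-Eells seminorm of a nonzero molecule is strictly positive; hence it is a norm
on the space of molecules. -/
theorem aeNorm_pos_of_ne_zero {X : Type*} [MetricSpace X] (m : X →₀ ℝ)
    (hm : IsMolecule m) (hne : m ≠ 0) : 0 < aeNorm m := by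
  classical
  obtain ⟨x₀, hx₀⟩ := Finsupp.support_nonempty_iff.2 hne
  set T : Set X := ↑(m.support.erase x₀)
  have hT : 0 < infDist x₀ T :=
    ((m.support.erase x₀).finite_toSet.isClosed.notMem_iff_infDist_pos
      (Finset.coe_nonempty.2 (hm.support_erase_nonempty hx₀))).1 (by simp)
  have hL : linearCombination ℝ (infDist · T) m = m x₀ * infDist x₀ T := by
    rw [linearCombination_apply, Finsupp.sum, Finset.sum_eq_single_of_mem x₀ hx₀
      fun x hx hxx₀ => by rw [infDist_zero_of_mem (by simp [T, hx, hxx₀]), smul_zero],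
      smul_eq_mul]
  calc 0 < |m x₀ * infDist x₀ T| :=
        abs_pos.2 (mul_ne_zero (Finsupp.mem_support_iff.1 hx₀) hT.ne')
    _ = |linearCombination ℝ (infDist · T) m| := by rw [hL]
    _ ≤ aeNorm m := hm.abs_linearCombination_le_aeNorm (lipschitz_infDist_pt T)
end

section
/- Suppose the Urysohn space U is isometrically embedded in a Banach space B with 0 ∈ U, and let X ⊆ U be a copy of U and X' ⊆ B' a copy of U in another Banach space B' with 0 ∈ X'. Then any isometry φ : X → X' with φ(0) = 0 extends to a linear isometry from the closed linear span of X in B onto the closed linear span of X' in B', assuming Holmes' formula: for all x_1,...,x_n ∈ U and scalars λ_i, ||Σ λ_i x_i|| = sup { |Σ λ_i f(x_i)| : f ∈ [Lip_0({x_1,...,x_n} ∪ {0})]_1 }. -/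
/-- Holmes' norm formula for a subset `U` of a Banach space containing `0`: for all points
`x₁,…,xₙ ∈ U` and scalars `λᵢ`,
`‖Σ λᵢ • xᵢ‖ = sup { |Σ λᵢ f(xᵢ)| : f ∈ [Lip₀({x₁,…,xₙ} ∪ {0})]₁ }`. -/
def HolmesFormula {B : Type*} [NormedAddCommGroup B] [NormedSpace ℝ B] (U : Set B) : Prop :=
  ∀ (n : ℕ) (x : Fin n → B), (∀ i, x i ∈ U) → ∀ lam : Fin n → ℝ,
    ‖∑ i, lam i • x i‖ = sSup { c : ℝ | ∃ f : B → ℝ, f 0 = 0 ∧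
      LipschitzOnWith 1 f (Set.range x ∪ {0}) ∧ c = |∑ i, lam i * f (x i)| }

/-!
Holmes' formula expresses the norm of a finite combination `∑ λᵢ xᵢ` of points of `X` purely in
terms of the metric of the finite set `{x₁, …, xₙ, 0}`. A bijective isometry fixing `0`
transports 1-Lipschitz functions vanishing at `0` in both directions, so `∑ λᵢ xᵢ` and
`∑ λᵢ φ(xᵢ)` have equal norms. Hence `∑ λᵢ xᵢ ↦ ∑ λᵢ φ(xᵢ)` is a well-defined linear isometry
from `span X` onto `span X'`, and it extends by density to the closures.
-/

open Set Function Submodule LinearMap Finsupp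

section
variable {R M N : Type*} [Ring R] [AddCommGroup M] [Module R M] [AddCommGroup N] [Module R N]

theorem Submodule.denseRange_inclusion_comp_of_surjective [TopologicalSpace N] [ContinuousAdd N]
    [ContinuousConstSMul R N] {p : Submodule R N} (g : M →ₗ[R] p)
    (hg : Surjective g) : DenseRange (inclusion p.le_topologicalClosure ∘ₗ g) :=
  ((denseRange_inclusion_iff p.le_topologicalClosure).2 subset_rfl).comp hg.denseRange
    (by fun_prop)

theorem LinearMap.surjective_liftQ_rangeRestrict (K : Submodule R M) (C : M →ₗ[R] N)
    (hC : K ≤ ker C.rangeRestrict) : Surjective (K.liftQ C.rangeRestrict hC) := by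
  rw [← range_eq_top, range_liftQ, range_rangeRestrict]

end

theorem Finsupp.exists_fin_sum_single_eq {α M : Type*} [AddCommMonoid M] (v : α →₀ M) :
    ∃ (n : ℕ) (a : Fin n → α) (c : Fin n → M), v = ∑ i, single (a i) (c i) := by
  refine ⟨_, (↑) ∘ v.support.equivFin.symm, v ∘ (↑) ∘ v.support.equivFin.symm, ?_⟩
  conv_lhs => rw [← v.sum_single, Finsupp.sum, ← Finset.sum_coe_sort,
    ← Equiv.sum_comp v.support.equivFin.symm]
  rfl

section
variable {𝕜 M E F : Type*} [NormedField 𝕜] [AddCommGroup M] [Module 𝕜 M]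
  [NormedAddCommGroup E] [NormedSpace 𝕜 E] [CompleteSpace E]
  [NormedAddCommGroup F] [NormedSpace 𝕜 F] [CompleteSpace F]

theorem LinearMap.exists_linearIsometryEquiv_topologicalClosure_range
    (A : M →ₗ[𝕜] E) (B : M →ₗ[𝕜] F) (h : ∀ v, ‖B v‖ = ‖A v‖) :
    ∃ L : (range A).topologicalClosure ≃ₗᵢ[𝕜] (range B).topologicalClosure,
      ∀ v (hv : A v ∈ (range A).topologicalClosure), (L ⟨A v, hv⟩ : F) = B v := by
  have hker : ker A = ker B := by
    ext v
    rw [mem_ker, mem_ker, ← norm_eq_zero, ← h, norm_eq_zero]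
  -- both maps factor through `M ⧸ ker A`, on which they induce the same norm
  have hA := (ker_rangeRestrict A).ge
  have hB := hker.trans_le (ker_rangeRestrict B).ge
  let e₁ := inclusion (range A).le_topologicalClosure ∘ₗ (ker A).liftQ A.rangeRestrict hA
  let e₂ := inclusion (range B).le_topologicalClosure ∘ₗ (ker A).liftQ B.rangeRestrict hB
  have hnorm : ∀ x, ‖e₂ (LinearEquiv.refl 𝕜 _ x)‖ = ‖e₁ x‖ := fun x =>
    Submodule.Quotient.induction_on _ x h
  refine ⟨(LinearEquiv.refl 𝕜 _).extendOfIsometry e₁ e₂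
    (denseRange_inclusion_comp_of_surjective _ (surjective_liftQ_rangeRestrict _ A hA))
    (denseRange_inclusion_comp_of_surjective _ (surjective_liftQ_rangeRestrict _ B hB)) hnorm,
    fun v hv => ?_⟩
  exact congrArg Subtype.val
    (LinearEquiv.extendOfIsometry_eq _ e₁ e₂ _ _ hnorm (Submodule.Quotient.mk v))

theorem exists_linearIsometryEquiv_topologicalClosure_span (s : Set E) (t : Set F) (φ : E → F)
    (hst : φ '' s = t)
    (h : ∀ v : s →₀ 𝕜, ‖linearCombination 𝕜 (φ ∘ (↑)) v‖ = ‖linearCombination 𝕜 ((↑) : s → E) v‖) :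
    ∃ L : (span 𝕜 s).topologicalClosure ≃ₗᵢ[𝕜] (span 𝕜 t).topologicalClosure,
      ∀ x ∈ s, ∀ hx' : x ∈ (span 𝕜 s).topologicalClosure, (L ⟨x, hx'⟩ : F) = φ x := by
  have key := exists_linearIsometryEquiv_topologicalClosure_range _ _ h
  rw [range_linearCombination, range_linearCombination, range_comp, Subtype.range_coe, hst]
    at key
  obtain ⟨L, hL⟩ := key
  refine ⟨L, fun x hx hx' => ?_⟩
  simpa using hL (single ⟨x, hx⟩ 1) (by simpa using hx')
end

theorem image_range_union_zero {ι E F : Type*} [Zero E] [Zero F] {ψ : E → F} (hψ0 : ψ 0 = 0)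
    (x : ι → E) : ψ '' (range x ∪ {0}) = range (ψ ∘ x) ∪ {0} := by
  rw [image_union, image_singleton, hψ0, range_comp]

section
variable {E F : Type*} [PseudoMetricSpace E] [Zero E] [PseudoMetricSpace F] [Zero F] {n : ℕ}

def holmesPairings (x : Fin n → E) (lam : Fin n → ℝ) : Set ℝ :=
  { c | ∃ f : E → ℝ, f 0 = 0 ∧ LipschitzOnWith 1 f (range x ∪ {0}) ∧ c = |∑ i, lam i * f (x i)| }

theorem holmesPairings_comp_subset {ψ : E → F} (hψ0 : ψ 0 = 0) {x : Fin n → E}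
    (hψ : LipschitzOnWith 1 ψ (range x ∪ {0})) (lam : Fin n → ℝ) :
    holmesPairings (ψ ∘ x) lam ⊆ holmesPairings x lam := by
  rintro _ ⟨g, hg0, hg, rfl⟩
  have hmaps : MapsTo ψ (range x ∪ {0}) (range (ψ ∘ x) ∪ {0}) :=
    image_range_union_zero hψ0 x ▸ mapsTo_image ψ _
  exact ⟨g ∘ ψ, by simp [hψ0, hg0], by simpa using hg.comp hψ hmaps, rfl⟩

theorem holmesPairings_comp_of_bijOn {s : Set E} {t : Set F} {φ : E → F} (hbij : BijOn φ s t)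
    (hiso : ∀ x ∈ s, ∀ y ∈ s, dist (φ x) (φ y) = dist x y) (h0 : (0 : E) ∈ s) (hφ0 : φ 0 = 0)
    {x : Fin n → E} (hx : ∀ i, x i ∈ s) (lam : Fin n → ℝ) :
    holmesPairings (φ ∘ x) lam = holmesPairings x lam := by
  have hsub : range x ∪ {0} ⊆ s := union_subset (range_subset_iff.2 hx) (singleton_subset_iff.2 h0)
  refine (holmesPairings_comp_subset hφ0 ?_ lam).antisymm ?_
  · exact (LipschitzOnWith.of_dist_le_mul fun a ha b hb => by simp [hiso a ha b hb]).mono hsub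
  have : Nonempty E := ⟨0⟩
  set ψ := invFunOn φ s
  have hψφ : ψ ∘ φ ∘ x = x := funext fun i => hbij.invOn_invFunOn.1 (hx i)
  have hψ0 : ψ 0 = 0 := by rw [← hφ0]; exact hbij.invOn_invFunOn.1 h0
  have hψ : LipschitzOnWith 1 ψ t := LipschitzOnWith.of_dist_le_mul fun a ha b hb => by
    rw [← hiso _ (hbij.surjOn.mapsTo_invFunOn ha) _ (hbij.surjOn.mapsTo_invFunOn hb),
      hbij.invOn_invFunOn.2 ha, hbij.invOn_invFunOn.2 hb]
    simp
  have hsub' : range (φ ∘ x) ∪ {0} ⊆ t :=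
    image_range_union_zero hφ0 x ▸ (image_mono hsub).trans hbij.mapsTo.image_subset
  simpa only [hψφ] using holmesPairings_comp_subset hψ0 (hψ.mono hsub') lam
end

theorem HolmesFormula.norm_sum_eq {B : Type*} [NormedAddCommGroup B] [NormedSpace ℝ B] {U : Set B}
    (hU : HolmesFormula U) {n : ℕ} {x : Fin n → B} (hx : ∀ i, x i ∈ U) (lam : Fin n → ℝ) :
    ‖∑ i, lam i • x i‖ = sSup (holmesPairings x lam) :=
  hU n x hx lam

theorem HolmesFormula.norm_sum_smul_comp_of_bijOn {B B' : Type*}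
    [NormedAddCommGroup B] [NormedSpace ℝ B] [NormedAddCommGroup B'] [NormedSpace ℝ B']
    {s : Set B} {t : Set B'} (hs : HolmesFormula s) (ht : HolmesFormula t) {φ : B → B'}
    (hbij : BijOn φ s t) (hiso : ∀ x ∈ s, ∀ y ∈ s, dist (φ x) (φ y) = dist x y)
    (h0 : (0 : B) ∈ s) (hφ0 : φ 0 = 0) {n : ℕ} {x : Fin n → B} (hx : ∀ i, x i ∈ s)
    (lam : Fin n → ℝ) :
    ‖∑ i, lam i • φ (x i)‖ = ‖∑ i, lam i • x i‖ :=
  calc ‖∑ i, lam i • φ (x i)‖ = sSup (holmesPairings (φ ∘ x) lam) :=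
        ht.norm_sum_eq (fun i => hbij.mapsTo (hx i)) lam
    _ = sSup (holmesPairings x lam) := by
        rw [holmesPairings_comp_of_bijOn hbij hiso h0 hφ0 hx lam]
    _ = ‖∑ i, lam i • x i‖ := (hs.norm_sum_eq hx lam).symm

theorem isometry_extends_to_closed_span_general {B B' : Type*}
    [NormedAddCommGroup B] [NormedSpace ℝ B] [CompleteSpace B]
    [NormedAddCommGroup B'] [NormedSpace ℝ B'] [CompleteSpace B']
    (Xs : Set B) (Xs' : Set B') (h0 : (0 : B) ∈ Xs)
    (hH : HolmesFormula Xs) (hH' : HolmesFormula Xs')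
    (φ : B → B') (hbij : Set.BijOn φ Xs Xs') (hφ0 : φ 0 = 0)
    (hiso : ∀ x ∈ Xs, ∀ y ∈ Xs, dist (φ x) (φ y) = dist x y) :
    ∃ L : (Submodule.span ℝ Xs).topologicalClosure ≃ₗᵢ[ℝ]
          (Submodule.span ℝ Xs').topologicalClosure,
      ∀ (x : B) (hx : x ∈ Xs) (hx' : x ∈ (Submodule.span ℝ Xs).topologicalClosure),
        (L ⟨x, hx'⟩ : B') = φ x := by
  refine exists_linearIsometryEquiv_topologicalClosure_span Xs Xs' φ hbij.image_eq fun v => ?_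
  obtain ⟨n, a, c, rfl⟩ := v.exists_fin_sum_single_eq
  simp only [map_sum, linearCombination_single]
  exact hH.norm_sum_smul_comp_of_bijOn hH' hbij hiso h0 hφ0 (fun i => (a i).2) c

/-- Suppose `X ⊆ B` and `X' ⊆ B'` are isometric copies of the Urysohn space in Banach spaces
`B`, `B'`, with `0 ∈ X`, `0 ∈ X'`, both satisfying Holmes' norm formula. Then any isometry
`φ : X → X'` with `φ(0) = 0` extends to a linear isometry from the closed linear span of `X`
in `B` onto the closed linear span of `X'` in `B'`. -/
theorem isometry_extends_to_closed_span {B B' : Type*}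
    [NormedAddCommGroup B] [NormedSpace ℝ B] [CompleteSpace B]
    [NormedAddCommGroup B'] [NormedSpace ℝ B'] [CompleteSpace B']
    (Xs : Set B) (Xs' : Set B') (h0 : (0 : B) ∈ Xs) (h0' : (0 : B') ∈ Xs')
    (hH : HolmesFormula Xs) (hH' : HolmesFormula Xs')
    (φ : B → B') (hbij : Set.BijOn φ Xs Xs') (hφ0 : φ 0 = 0)
    (hiso : ∀ x ∈ Xs, ∀ y ∈ Xs, dist (φ x) (φ y) = dist x y) :
    ∃ L : (Submodule.span ℝ Xs).topologicalClosure ≃ₗᵢ[ℝ]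
          (Submodule.span ℝ Xs').topologicalClosure,
      ∀ (x : B) (hx : x ∈ Xs) (hx' : x ∈ (Submodule.span ℝ Xs).topologicalClosure),
        (L ⟨x, hx'⟩ : B') = φ x :=
  isometry_extends_to_closed_span_general Xs Xs' h0 hH hH' φ hbij hφ0 hiso
end

section
/- Assuming Holmes' norm formula for isometric copies of U containing 0 in a Banach space, if U ⊆ B with 0 ∈ U and P ⊆ U is a Polish metric space containing 0, then the closed linear span of P in B is linearly isometric to the Lipschitz-free space F(P). -/
open Set Finsupp
open scoped Pointwise

theorem Seminorm.exists_dual_abs_le_and_eq {E : Type*} [AddCommGroup E] [Module ℝ E] (p : Seminorm ℝ E) (x : E) :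
    ∃ g : Module.Dual ℝ E, (∀ y, |g y| ≤ p y) ∧ g x = p x := by
  have hx : ∀ c : ℝ, c • x = 0 → c • p x = 0 := fun c hc => by
    rcases eq_or_ne c 0 with rfl | hc0
    · exact zero_smul _ _
    · rw [(smul_eq_zero.1 hc).resolve_left hc0, map_zero, smul_zero]
  set f := LinearPMap.mkSpanSingleton' (σ := RingHom.id ℝ) x (p x) hx
  have hf : ∀ z : f.domain, f z ≤ p z := by
    rintro ⟨z, hz⟩
    obtain ⟨c, rfl⟩ := Submodule.mem_span_singleton.1 hz
    rw [LinearPMap.mkSpanSingleton'_apply, map_smul_eq_mul, Real.norm_eq_abs]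
    exact mul_le_mul_of_nonneg_right (le_abs_self c) (apply_nonneg p x)
  obtain ⟨g, hgf, hgp⟩ := exists_extension_of_le_sublinear f p
    (fun c hc y => by rw [map_smul_eq_mul, Real.norm_eq_abs, abs_of_pos hc])
    (map_add_le_add p) hf
  refine ⟨g, p.abs_le_of_le hgp, ?_⟩
  have hxf : x ∈ f.domain := Submodule.mem_span_singleton_self x
  exact (hgf ⟨x, hxf⟩).trans (LinearPMap.mkSpanSingleton'_apply_self x (p x) hx hxf)

section ArensEells

variable {X : Type*}

theorem linearCombination_mol_s18 {M : Type*} [AddCommGroup M] [Module ℝ M] (v : X → M) (x y : X) :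
    linearCombination ℝ v (mol x y) = v x - v y := by
  simp [mol]

theorem linearCombination_sum_smul_mol {M : Type*} [AddCommGroup M] [Module ℝ M] (v : X → M)
    {n : ℕ} (a : Fin n → ℝ) (p q : Fin n → X) :
    linearCombination ℝ v (∑ i, a i • mol (p i) (q i)) = ∑ i, a i • (v (p i) - v (q i)) := by
  simp [map_sum, linearCombination_mol_s18]

theorem mol_sub_mol (x y z : X) : mol x z - mol y z = mol x y := by
  simp only [mol]
  abel

variable (X) in
noncomputable def molSpan : Submodule ℝ (X →₀ ℝ) :=
  Submodule.span ℝ (range (Function.uncurry (mol (X := X))))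

theorem mol_mem_molSpan (x y : X) : mol x y ∈ molSpan X :=
  Submodule.subset_span ⟨(x, y), rfl⟩

variable [MetricSpace X]

def aeCosts (m : X →₀ ℝ) : Set ℝ :=
  { c | ∃ (n : ℕ) (a : Fin n → ℝ) (p q : Fin n → X),
    m = ∑ i, a i • mol (p i) (q i) ∧ c = ∑ i, |a i| * dist (p i) (q i) }

theorem aeNorm_eq_sInf_aeCosts (m : X →₀ ℝ) : aeNorm m = sInf (aeCosts m) := rfl

theorem aeCosts_nonneg {m : X →₀ ℝ} {c : ℝ} (hc : c ∈ aeCosts m) : 0 ≤ c := by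
  obtain ⟨n, a, p, q, -, rfl⟩ := hc
  exact Finset.sum_nonneg fun i _ => mul_nonneg (abs_nonneg _) dist_nonneg

theorem bddBelow_aeCosts (m : X →₀ ℝ) : BddBelow (aeCosts m) :=
  ⟨0, fun _ => aeCosts_nonneg⟩

theorem aeNorm_nonneg (m : X →₀ ℝ) : 0 ≤ aeNorm m :=
  Real.sInf_nonneg fun _ => aeCosts_nonneg

theorem zero_mem_aeCosts_zero : (0 : ℝ) ∈ aeCosts (0 : X →₀ ℝ) :=
  ⟨0, Fin.elim0, Fin.elim0, Fin.elim0, by simp, by simp⟩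

theorem dist_mem_aeCosts_mol (x y : X) : dist x y ∈ aeCosts (mol x y) :=
  ⟨1, fun _ => 1, fun _ => x, fun _ => y, by simp, by simp⟩

theorem add_subset_aeCosts_add (m₁ m₂ : X →₀ ℝ) :
    aeCosts m₁ + aeCosts m₂ ⊆ aeCosts (m₁ + m₂) := by
  rintro _ ⟨_, ⟨n₁, a₁, p₁, q₁, rfl, rfl⟩, _, ⟨n₂, a₂, p₂, q₂, rfl, rfl⟩, rfl⟩
  refine ⟨n₁ + n₂, Fin.addCases a₁ a₂, Fin.addCases p₁ p₂, Fin.addCases q₁ q₂, ?_, ?_⟩ <;>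
    simp [Fin.sum_univ_add]

theorem abs_smul_subset_aeCosts_smul (c : ℝ) (m : X →₀ ℝ) :
    |c| • aeCosts m ⊆ aeCosts (c • m) := by
  rintro _ ⟨_, ⟨n, a, p, q, rfl, rfl⟩, rfl⟩
  refine ⟨n, fun i => c * a i, p, q, ?_, ?_⟩
  · simp [Finset.smul_sum, smul_smul]
  · simp [Finset.mul_sum, abs_mul, mul_assoc]

theorem aeCosts_nonempty {m : X →₀ ℝ} (hm : m ∈ molSpan X) : (aeCosts m).Nonempty := by
  induction hm using Submodule.span_induction with
  | mem _ h =>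
    obtain ⟨⟨x, y⟩, rfl⟩ := h
    exact ⟨_, dist_mem_aeCosts_mol x y⟩
  | zero => exact ⟨0, zero_mem_aeCosts_zero⟩
  | add m₁ m₂ _ _ h₁ h₂ => exact (h₁.add h₂).mono (add_subset_aeCosts_add m₁ m₂)
  | smul c m _ h => exact (h.smul_set).mono (abs_smul_subset_aeCosts_smul c m)

theorem aeNorm_mol_le (x y : X) : aeNorm (mol x y) ≤ dist x y :=
  csInf_le (bddBelow_aeCosts _) (dist_mem_aeCosts_mol x y)

theorem aeNorm_add_le {m₁ m₂ : X →₀ ℝ} (hm₁ : m₁ ∈ molSpan X) (hm₂ : m₂ ∈ molSpan X) :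
    aeNorm (m₁ + m₂) ≤ aeNorm m₁ + aeNorm m₂ := by
  have h₁ := aeCosts_nonempty hm₁
  have h₂ := aeCosts_nonempty hm₂
  rw [aeNorm_eq_sInf_aeCosts, aeNorm_eq_sInf_aeCosts, aeNorm_eq_sInf_aeCosts,
    ← csInf_add h₁ (bddBelow_aeCosts _) h₂ (bddBelow_aeCosts _)]
  exact csInf_le_csInf (bddBelow_aeCosts _) (h₁.add h₂) (add_subset_aeCosts_add m₁ m₂)

theorem aeNorm_smul_le (c : ℝ) {m : X →₀ ℝ} (hm : m ∈ molSpan X) :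
    aeNorm (c • m) ≤ |c| * aeNorm m := by
  rw [aeNorm_eq_sInf_aeCosts, aeNorm_eq_sInf_aeCosts, ← smul_eq_mul,
    ← Real.sInf_smul_of_nonneg (abs_nonneg c)]
  exact csInf_le_csInf (bddBelow_aeCosts _) (aeCosts_nonempty hm).smul_set
    (abs_smul_subset_aeCosts_smul c m)

theorem aeNorm_smul (c : ℝ) {m : X →₀ ℝ} (hm : m ∈ molSpan X) :
    aeNorm (c • m) = |c| * aeNorm m := by
  refine le_antisymm (aeNorm_smul_le c hm) ?_
  rcases eq_or_ne c 0 with rfl | hc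
  · simpa using aeNorm_nonneg (0 : X →₀ ℝ)
  calc |c| * aeNorm m = |c| * aeNorm (c⁻¹ • c • m) := by rw [inv_smul_smul₀ hc]
    _ ≤ |c| * (|c⁻¹| * aeNorm (c • m)) :=
      mul_le_mul_of_nonneg_left (aeNorm_smul_le _ (Submodule.smul_mem _ c hm)) (abs_nonneg c)
    _ = aeNorm (c • m) := by rw [← mul_assoc, ← abs_mul, mul_inv_cancel₀ hc, abs_one, one_mul]

variable (X) in
noncomputable def aeSeminorm : Seminorm ℝ (molSpan X) :=
  Seminorm.of (fun m => aeNorm (m : X →₀ ℝ)) (fun m₁ m₂ => aeNorm_add_le m₁.2 m₂.2)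
    (fun c m => by rw [Real.norm_eq_abs]; exact aeNorm_smul c m.2)

theorem aeSeminorm_apply (m : molSpan X) : aeSeminorm X m = aeNorm (m : X →₀ ℝ) := rfl

theorem norm_linearCombination_le_aeNorm {E : Type*} [SeminormedAddCommGroup E]
    [NormedSpace ℝ E] {ι : X → E} (hι : LipschitzWith 1 ι) {m : X →₀ ℝ} (hm : m ∈ molSpan X) :
    ‖linearCombination ℝ ι m‖ ≤ aeNorm m := by
  refine le_csInf (aeCosts_nonempty hm) ?_
  rintro _ ⟨n, a, p, q, rfl, rfl⟩
  calc ‖linearCombination ℝ ι (∑ i, a i • mol (p i) (q i))‖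
      = ‖∑ i, a i • (ι (p i) - ι (q i))‖ := by rw [linearCombination_sum_smul_mol]
    _ ≤ ∑ i, ‖a i • (ι (p i) - ι (q i))‖ := norm_sum_le _ _
    _ ≤ ∑ i, |a i| * dist (p i) (q i) := Finset.sum_le_sum fun i _ => by
      rw [norm_smul, Real.norm_eq_abs, ← dist_eq_norm]
      exact mul_le_mul_of_nonneg_left (by simpa using hι.dist_le_mul (p i) (q i)) (abs_nonneg _)

theorem exists_lipschitzWith_linearCombination_eq_aeNorm (b : X) {m : X →₀ ℝ}
    (hm : m ∈ molSpan X) :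
    ∃ φ : X → ℝ, LipschitzWith 1 φ ∧ φ b = 0 ∧ linearCombination ℝ φ m = aeNorm m := by
  obtain ⟨g, hg, hgm⟩ := (aeSeminorm X).exists_dual_abs_le_and_eq ⟨m, hm⟩
  set φ : X → ℝ := fun x => g ⟨mol x b, mol_mem_molSpan x b⟩
  have hg_mol : ∀ x y, g ⟨mol x y, mol_mem_molSpan x y⟩ = φ x - φ y := fun x y => by
    rw [← map_sub]
    congr 1
    exact Subtype.ext (mol_sub_mol x y b).symm
  have hφ_eq_g : ∀ e (he : e ∈ molSpan X), linearCombination ℝ φ e = g ⟨e, he⟩ := by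
    intro e he
    induction he using Submodule.span_induction with
    | mem _ h =>
      obtain ⟨⟨x, y⟩, rfl⟩ := h
      exact (linearCombination_mol_s18 φ x y).trans (hg_mol x y).symm
    | zero => exact (map_zero _).trans (map_zero g).symm
    | add e₁ e₂ he₁ he₂ h₁ h₂ =>
      rw [map_add, h₁, h₂, ← map_add]
      rfl
    | smul c e he h =>
      rw [map_smul, h, ← map_smul]
      rfl
  refine ⟨φ, LipschitzWith.of_le_add_mul 1 fun x y => ?_, ?_, (hφ_eq_g m hm).trans hgm⟩
  · have hle := (le_abs_self _).trans (hg ⟨mol x y, mol_mem_molSpan x y⟩)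
    rw [hg_mol, aeSeminorm_apply] at hle
    rw [NNReal.coe_one, one_mul]
    linarith [aeNorm_mol_le x y]
  · convert map_zero g using 2
    exact Subtype.ext (sub_self _)

end ArensEells

theorem HolmesFormula.abs_sum_mul_le_norm_sum {B : Type*} [NormedAddCommGroup B]
    [NormedSpace ℝ B] {U : Set B} (hH : HolmesFormula U) {n : ℕ} {x : Fin n → B}
    (hx : ∀ i, x i ∈ U) (lam : Fin n → ℝ) {f : B → ℝ} (hf0 : f 0 = 0)
    (hf : LipschitzOnWith 1 f (range x ∪ {0})) :
    |∑ i, lam i * f (x i)| ≤ ‖∑ i, lam i • x i‖ := by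
  rw [hH n x hx lam]
  refine le_csSup ⟨∑ i, |lam i| * ‖x i‖, ?_⟩ ⟨f, hf0, hf, rfl⟩
  rintro _ ⟨f', hf'0, hf', rfl⟩
  calc |∑ i, lam i * f' (x i)| ≤ ∑ i, |lam i * f' (x i)| := Finset.abs_sum_le_sum_abs _ _
    _ ≤ ∑ i, |lam i| * ‖x i‖ := Finset.sum_le_sum fun i _ => by
      rw [abs_mul]
      refine mul_le_mul_of_nonneg_left ?_ (abs_nonneg _)
      simpa [hf'0, Real.dist_eq, dist_eq_norm] using
        hf'.dist_le_mul (x i) (Or.inl ⟨i, rfl⟩) 0 (Or.inr rfl)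

theorem closed_span_isometric_to_free_space_general {B : Type*}
    [NormedAddCommGroup B] [NormedSpace ℝ B]
    (Uset : Set B) (hH : HolmesFormula Uset)
    (Pset : Set B) (hPU : Pset ⊆ Uset) (h0P : (0 : B) ∈ Pset) :
    ∀ (n : ℕ) (lam : Fin n → ℝ) (p : Fin n → B) (hp : ∀ i, p i ∈ Pset),
      ‖∑ i, lam i • p i‖ =
        aeNorm (∑ i, lam i • mol (⟨p i, hp i⟩ : Pset) (⟨0, h0P⟩ : Pset)) := by
  classical
  intro n lam p hp
  set M := ∑ i, lam i • mol (⟨p i, hp i⟩ : Pset) (⟨0, h0P⟩ : Pset)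
  have hM : M ∈ molSpan Pset :=
    Submodule.sum_mem _ fun i _ => Submodule.smul_mem _ _ (mol_mem_molSpan _ _)
  refine le_antisymm ?_ ?_
  · simpa only [M, linearCombination_sum_smul_mol, sub_zero] using
      norm_linearCombination_le_aeNorm isometry_subtype_coe.lipschitz hM
  obtain ⟨φ, hφ, hφ0, hφM⟩ := exists_lipschitzWith_linearCombination_eq_aeNorm ⟨0, h0P⟩ hM
  set F : B → ℝ := fun v => if h : v ∈ Pset then φ ⟨v, h⟩ else 0
  have hF : LipschitzOnWith 1 F Pset := by
    have hF_restrict : Pset.domRestrict F = φ := funext fun x => dif_pos x.2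
    rwa [lipschitzOnWith_iff_restrict, hF_restrict]
  calc aeNorm M = ∑ i, lam i * F (p i) := by
        rw [← hφM, linearCombination_sum_smul_mol]
        simp [F, hp, hφ0]
    _ ≤ |∑ i, lam i * F (p i)| := le_abs_self _
    _ ≤ ‖∑ i, lam i • p i‖ := hH.abs_sum_mul_le_norm_sum (fun i => hPU (hp i)) lam
        (by simp [F, h0P, hφ0])
        (hF.mono (union_subset (range_subset_iff.2 hp) (singleton_subset_iff.2 h0P)))

/-- Assuming Holmes' norm formula for a copy `U ⊆ B` of the Urysohn space with `0 ∈ U`, if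
`P ⊆ U` is a Polish metric space containing `0`, then the closed linear span of `P` in `B`
is linearly isometric to the Lipschitz-free space `F(P)` (with basepoint `0`): the norm of
every finite linear combination of points of `P` in `B` equals the Arens-Eells norm of the
corresponding molecule, so the correspondence extends to a linear isometry between the
completions. -/
theorem closed_span_isometric_to_free_space {B : Type*}
    [NormedAddCommGroup B] [NormedSpace ℝ B] [CompleteSpace B]
    (Uset : Set B) (h0U : (0 : B) ∈ Uset) (hH : HolmesFormula Uset)
    (Pset : Set B) (hPU : Pset ⊆ Uset) (h0P : (0 : B) ∈ Pset)
    (hPolish : IsClosed Pset ∧ TopologicalSpace.SeparableSpace Pset) :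
    ∀ (n : ℕ) (lam : Fin n → ℝ) (p : Fin n → B) (hp : ∀ i, p i ∈ Pset),
      ‖∑ i, lam i • p i‖ =
        aeNorm (∑ i, lam i • mol (⟨p i, hp i⟩ : Pset) (⟨0, h0P⟩ : Pset)) :=
  closed_span_isometric_to_free_space_general Uset hH Pset hPU h0P
end
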